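/- arXiv:2604.21191 — 2 statements merged into one kernel-verified Lean document; each statement's English description precedes it below -/
import Mathlib

section
/- If G is a weighted context-free grammar in canonical two-form (every rule has right-hand side of length at most two), then the size of its prefix grammar Pre(G) is at most (8/3)·|G| + 3, where grammar size is the sum over rules of (1 + arity of the rule). -/
/-- A weighted context-free rule: `lhs → rhs` with weight `wt`. -/
structure Rule (V T W : Type) where
  lhs : V
  rhs : List (V ⊕ T)
  wt : W

/-- Derivation trees: a leaf is a terminal; an internal node records the rule applied. -/
inductive PTree (V T W : Type) where
  | leaf : T → PTree V T W
  | node : Rule V T W → List (PTree V T W) → PTree V T W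

namespace PTree
variable {V T W : Type}

/-- Root symbol of a derivation tree. -/
def root : PTree V T W → V ⊕ T
  | leaf t => .inr t
  | node r _ => .inl r.lhs

/-- Yield (the string of terminals at the leaves). -/
def yield : PTree V T W → List T
  | leaf t => [t]
  | node _ cs => (cs.attach.map fun c => yield c.1).flatten
decreasing_by
  have := List.sizeOf_lt_of_mem c.2
  simp only [PTree.node.sizeOf_spec]
  omega

/-- Weight of a derivation tree: the product of the weights of the rules used. -/
def wt [Monoid W] : PTree V T W → W
  | leaf _ => 1
  | node r cs => r.wt * (cs.attach.map fun c => wt c.1).prod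
decreasing_by
  have := List.sizeOf_lt_of_mem c.2
  simp only [PTree.node.sizeOf_spec]
  omega

/-- Height of a derivation tree (terminal leaves have height 0). -/
def height : PTree V T W → ℕ
  | leaf _ => 0
  | node _ cs => 1 + ((cs.attach.map fun c => height c.1).foldr max 0)
decreasing_by
  have := List.sizeOf_lt_of_mem c.2
  simp only [PTree.node.sizeOf_spec]
  omega

/-- Validity of a derivation tree with respect to a rule set. -/
inductive Valid (R : List (Rule V T W)) : PTree V T W → Prop where
  | leaf (t : T) : Valid R (.leaf t)
  | node {r : Rule V T W} {cs : List (PTree V T W)} :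
      r ∈ R → cs.map root = r.rhs → (∀ c ∈ cs, Valid R c) → Valid R (.node r cs)

end PTree

/-- A weighted context-free grammar. -/
structure WCFG (V T W : Type) where
  start : V
  rules : List (Rule V T W)

namespace WCFG
variable {V T : Type}

/-- Grammar size: sum over rules of (1 + arity). -/
def size {W : Type} (G : WCFG V T W) : ℕ :=
  (G.rules.map fun r => 1 + r.rhs.length).sum

/-- Weighted language of a symbol: total weight of derivation trees rooted at it with the
given yield. -/
noncomputable def symLang (G : WCFG V T ENNReal) (α : V ⊕ T) (x : List T) : ENNReal :=
  ∑' tr : {tr : PTree V T ENNReal //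
      PTree.Valid G.rules tr ∧ tr.root = α ∧ tr.yield = x}, tr.1.wt

/-- Weighted language of the grammar. -/
noncomputable def lang (G : WCFG V T ENNReal) (x : List T) : ENNReal :=
  G.symLang (.inl G.start) x

/-- Total weight of a symbol: the sum of the weights of all derivation trees rooted at it. -/
noncomputable def Z (G : WCFG V T ENNReal) (α : V ⊕ T) : ENNReal :=
  ∑' tr : {tr : PTree V T ENNReal // PTree.Valid G.rules tr ∧ tr.root = α}, tr.1.wt

end WCFG

section Prefix
variable {V T : Type}

/-- Embed a symbol of `G` into the symbol set of the prefix grammar (unprimed copy). -/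
def liftSym : V ⊕ T → (Option (V ⊕ V)) ⊕ T
  | .inl X => .inl (some (.inl X))
  | .inr t => .inr t

/-- The primed copy of a symbol: terminals are unchanged, nonterminals get primed. -/
def primeSym : V ⊕ T → (Option (V ⊕ V)) ⊕ T
  | .inl X => .inl (some (.inr X))
  | .inr t => .inr t

/-- The prefix grammar `Pre(G)`. Nonterminals are `Option (V ⊕ V)`: `none` is the new start
`S̄`, `some (.inl X)` is the original `X`, and `some (.inr X)` is the primed `X'`. -/
noncomputable def preG (G : WCFG V T ENNReal) : WCFG (Option (V ⊕ V)) T ENNReal where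
  start := none
  rules :=
    (G.rules.map fun r => ⟨some (.inl r.lhs), r.rhs.map liftSym, r.wt⟩)
    ++ [⟨none, [.inl (some (.inr G.start))], 1⟩,
        ⟨none, [], G.Z (.inl G.start)⟩]
    ++ G.rules.flatMap (fun r =>
        (List.finRange r.rhs.length).map (fun k =>
          ⟨some (.inr r.lhs),
           ((r.rhs.take (k : ℕ)).map liftSym) ++ [primeSym (r.rhs.get k)],
           r.wt * ((r.rhs.drop ((k : ℕ) + 1)).map (G.Z)).prod⟩))

end Prefix


lemma finRange_sum_le (n : ℕ) (hn : n ≤ 2) :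
    3 * ((1 + n) + ((List.finRange n).map fun (k : Fin n) => 1 + ((k:ℕ) + 1)).sum) ≤ 8 * (1 + n) := by
  interval_cases n <;> decide

lemma key_list {V T : Type} (l : List (Rule V T ENNReal))
    (h : ∀ r ∈ l, r.rhs.length ≤ 2) :
    3 * ((l.map fun r => 1 + r.rhs.length).sum +
      (l.map fun r => ((List.finRange r.rhs.length).map fun (k : Fin r.rhs.length) => 1 + ((k:ℕ) + 1)).sum).sum)
      ≤ 8 * (l.map fun r => 1 + r.rhs.length).sum := by
  induction l with
  | nil => simp
  | cons r l ih =>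
    have h1 := finRange_sum_le r.rhs.length (h r (by simp))
    have h2 := ih (fun r hr => h r (by simp [hr]))
    simp only [List.map_cons, List.sum_cons]
    omega

lemma preG_size_nat {V T : Type} (G : WCFG V T ENNReal)
    (hCTF : ∀ r ∈ G.rules, r.rhs.length ≤ 2) :
    3 * (preG G).size ≤ 8 * G.size + 9 := by
  unfold preG WCFG.size
  simp only [List.map_append, List.sum_append, List.flatMap, List.map_flatten,
    List.sum_flatten, List.map_map, Function.comp_def, List.length_map, List.length_append,
    List.length_take, List.length_cons, List.length_nil, List.map_cons, List.map_nil,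
    List.sum_cons, List.sum_nil]
  have hmin : ∀ (r : Rule V T ENNReal) (k : Fin r.rhs.length),
      min (k:ℕ) r.rhs.length = (k:ℕ) := fun r k => Nat.min_eq_left k.is_lt.le
  simp only [hmin, Nat.zero_add]
  have hk := key_list G.rules hCTF
  omega

/-- If `G` is in canonical two-form (every rule has right-hand side of
length at most two), then `|Pre(G)| ≤ (8/3)·|G| + 3`. -/
theorem prefix_grammar_size_bound {V T : Type} (G : WCFG V T ENNReal)
    (hCTF : ∀ r ∈ G.rules, r.rhs.length ≤ 2) :
    ((preG G).size : ℚ) ≤ 8 / 3 * (G.size : ℚ) + 3 := by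
  have h := preG_size_nat G hCTF
  have h' : (3 * (preG G).size : ℚ) ≤ 8 * (G.size : ℚ) + 9 := by exact_mod_cast h
  linarith
end

section
/- Every string generated with nonzero weight by the prefix grammar is a prefix of some string generated with nonzero weight by the original grammar: if G is a weighted CFG over ℝ≥0 and L_{Pre(G)}(x) > 0, then there exists y ∈ Σ* with L_G(xy) > 0. -/
/-!
A positive-weight derivation of `Pre(G)` is read back into `G`. Subtrees rooted at an unprimed
symbol use only copies of rules of `G` and translate rule by rule. At a primed node, built with a
rule `X' → α₁⋯α_{k−1}α_k'` of weight `w · Z(α_{k+1})⋯Z(α_K)`, positivity of the weight forces each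
`Z(α_j)`, `j > k`, to be positive, so each dropped symbol `α_j` has some positive-weight tree in
`G`; appending their yields to the translated primed child gives a derivation of `X` in `G`
whose yield extends the yield of the primed subtree.
-/

namespace PTree

variable {V T W : Type}

@[simp]
lemma yield_leaf (t : T) : (leaf t : PTree V T W).yield = [t] := by
  rw [yield]

@[simp]
lemma yield_node (r : Rule V T W) (cs : List (PTree V T W)) :
    (node r cs).yield = (cs.map yield).flatten := by
  rw [yield]; simp

lemma wt_node [Monoid W] (r : Rule V T W) (cs : List (PTree V T W)) :
    (node r cs).wt = r.wt * (cs.map wt).prod := by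
  rw [wt]; simp

lemma wt_node_ne_zero_iff [MonoidWithZero W] [Nontrivial W] [NoZeroDivisors W]
    {r : Rule V T W} {cs : List (PTree V T W)} :
    (node r cs).wt ≠ 0 ↔ r.wt ≠ 0 ∧ ∀ c ∈ cs, c.wt ≠ 0 := by
  simp [wt_node, List.prod_eq_zero_iff]

end PTree

namespace List

variable {α β γ δ : Type*}

lemma exists_forall₂_of_forall_exists {R : α → β → Prop} {l : List α}
    (h : ∀ a ∈ l, ∃ b, R a b) : ∃ m, Forall₂ R l m := by
  induction l with
  | nil => exact ⟨[], .nil⟩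
  | cons a l ih =>
    obtain ⟨b, hb⟩ := h a mem_cons_self
    obtain ⟨m, hm⟩ := ih fun a' ha' => h a' (mem_cons_of_mem a ha')
    exact ⟨b :: m, .cons hb hm⟩

lemma forall₂_map_of_map_eq_map {f : γ → δ} {g : α → δ} {k : γ → β} {P : α → β → Prop}
    {cs : List γ} {as : List α} (h : cs.map f = as.map g)
    (H : ∀ c ∈ cs, ∀ a, f c = g a → P a (k c)) : Forall₂ P as (cs.map k) := by
  induction cs generalizing as with
  | nil => simp_all
  | cons c cs ih =>
    obtain ⟨a, as, rfl⟩ := exists_cons_of_length_eq_add_one (by simpa using (congrArg length h).symm)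
    simp only [map_cons, cons.injEq] at h
    exact .cons (H c mem_cons_self a h.1) (ih h.2 fun c' hc' => H c' (mem_cons_of_mem c hc'))

lemma eq_take_append_get_cons_drop (l : List α) (k : Fin l.length) :
    l = l.take k ++ l.get k :: l.drop (k + 1) := by
  rw [get_eq_getElem, getElem_cons_drop, take_append_drop]

end List

namespace WCFG

open PTree

variable {V T W : Type}

def Generates [MonoidWithZero W] (G : WCFG V T W) (α : V ⊕ T) (x : List T) : Prop :=
  ∃ tr : PTree V T W, tr.Valid G.rules ∧ tr.root = α ∧ tr.yield = x ∧ tr.wt ≠ 0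

section Generates

variable [MonoidWithZero W] (G : WCFG V T W)

lemma generates_inr [Nontrivial W] (t : T) : G.Generates (.inr t) [t] :=
  ⟨.leaf t, .leaf t, rfl, yield_leaf t, by rw [wt]; exact one_ne_zero⟩

lemma exists_children_of_forall₂_generates {αs : List (V ⊕ T)} {xs : List (List T)}
    (h : List.Forall₂ G.Generates αs xs) :
    ∃ cs : List (PTree V T W), cs.map root = αs ∧ cs.map yield = xs ∧
      ∀ c ∈ cs, c.Valid G.rules ∧ c.wt ≠ 0 := by
  induction h with
  | nil => exact ⟨[], rfl, rfl, by simp⟩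
  | cons hc _ ih =>
    obtain ⟨c, hv, rfl, rfl, hw⟩ := hc
    obtain ⟨cs, rfl, rfl, hcs⟩ := ih
    exact ⟨c :: cs, rfl, rfl, by simpa [hv, hw] using hcs⟩

lemma Generates.node [Nontrivial W] [NoZeroDivisors W] {G : WCFG V T W} {r : Rule V T W}
    {xs : List (List T)} (hr : r ∈ G.rules) (hw : r.wt ≠ 0)
    (h : List.Forall₂ G.Generates r.rhs xs) : G.Generates (.inl r.lhs) xs.flatten := by
  obtain ⟨cs, hroots, rfl, hcs⟩ := G.exists_children_of_forall₂_generates h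
  exact ⟨.node r cs, .node hr hroots fun c hc => (hcs c hc).1, rfl, yield_node r cs,
    wt_node_ne_zero_iff.mpr ⟨hw, fun c hc => (hcs c hc).2⟩⟩

end Generates

variable (G : WCFG V T ENNReal)

lemma symLang_ne_zero_iff {α : V ⊕ T} {x : List T} : G.symLang α x ≠ 0 ↔ G.Generates α x := by
  simp [symLang, Generates, ENNReal.tsum_eq_zero]

lemma Z_ne_zero_iff {α : V ⊕ T} : G.Z α ≠ 0 ↔ ∃ x, G.Generates α x := by
  simp [Z, Generates, ENNReal.tsum_eq_zero]

end WCFG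

section PrefixGrammar

open PTree WCFG

variable {V T : Type} (G : WCFG V T ENNReal)

lemma mem_rules_preG {r : Rule (Option (V ⊕ V)) T ENNReal} (hr : r ∈ (preG G).rules) :
    (∃ r₀ ∈ G.rules, r = ⟨some (.inl r₀.lhs), r₀.rhs.map liftSym, r₀.wt⟩)
    ∨ r = ⟨none, [.inl (some (.inr G.start))], 1⟩
    ∨ r = ⟨none, [], G.Z (.inl G.start)⟩
    ∨ ∃ r₀ ∈ G.rules, ∃ k : Fin r₀.rhs.length,
        r = ⟨some (.inr r₀.lhs), (r₀.rhs.take k).map liftSym ++ [primeSym (r₀.rhs.get k)],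
             r₀.wt * ((r₀.rhs.drop (k + 1)).map G.Z).prod⟩ := by
  simp only [preG, List.mem_append, List.mem_map, List.mem_flatMap, List.mem_cons,
    List.not_mem_nil, or_false, List.mem_finRange, true_and] at hr
  rcases hr with (⟨r₀, hr₀, rfl⟩ | rfl | rfl) | ⟨r₀, hr₀, k, rfl⟩
  exacts [.inl ⟨r₀, hr₀, rfl⟩, .inr (.inl rfl), .inr (.inr (.inl rfl)),
    .inr (.inr (.inr ⟨r₀, hr₀, k, rfl⟩))]

variable {G}

theorem generates_yield_of_root_eq_liftSym {tr : PTree (Option (V ⊕ V)) T ENNReal}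
    (hv : tr.Valid (preG G).rules) (hw : tr.wt ≠ 0) {α : V ⊕ T} (hα : tr.root = liftSym α) :
    G.Generates α tr.yield := by
  induction hv generalizing α with
  | leaf t =>
    cases α <;> simp only [root, liftSym, reduceCtorEq, Sum.inr.injEq] at hα
    subst hα
    simpa using G.generates_inr t
  | node hr hroots _ ih =>
    rw [wt_node_ne_zero_iff] at hw
    rcases mem_rules_preG G hr with ⟨r₀, hr₀, rfl⟩ | rfl | rfl | ⟨r₀, -, k, rfl⟩ <;>
      cases α <;> simp only [root, liftSym, reduceCtorEq, Sum.inl.injEq, Option.some.injEq] at hα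
    subst hα
    rw [yield_node]
    exact .node hr₀ hw.1 <| List.forall₂_map_of_map_eq_map hroots
      fun c hc β hβ => ih c hc (hw.2 c hc) hβ

theorem exists_generates_yield_append_of_root_eq_primeSym
    {tr : PTree (Option (V ⊕ V)) T ENNReal} (hv : tr.Valid (preG G).rules) (hw : tr.wt ≠ 0)
    {α : V ⊕ T} (hα : tr.root = primeSym α) : ∃ y, G.Generates α (tr.yield ++ y) := by
  induction hv generalizing α with
  | leaf t =>
    cases α <;> simp only [root, primeSym, reduceCtorEq, Sum.inr.injEq] at hα
    subst hα
    exact ⟨[], by simpa using G.generates_inr t⟩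
  | @node r cs hr hroots hcs ih =>
    rw [wt_node_ne_zero_iff] at hw
    rcases mem_rules_preG G hr with ⟨r₀, -, rfl⟩ | rfl | rfl | ⟨r₀, hr₀, k, rfl⟩ <;>
      cases α <;> simp only [root, primeSym, reduceCtorEq, Sum.inl.injEq, Option.some.injEq,
        Sum.inr.injEq] at hα
    subst hα
    obtain ⟨hr₀w, hprod⟩ := mul_ne_zero_iff.mp hw.1
    have hZ : ∀ β ∈ r₀.rhs.drop (k + 1), G.Z β ≠ 0 := fun β hβ h0 =>
      hprod (List.prod_eq_zero_iff.mpr (h0 ▸ List.mem_map_of_mem hβ))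
    obtain ⟨cs₁, cs₂, rfl, hroots₁, hroots₂⟩ := List.map_eq_append_iff.mp hroots
    obtain ⟨c, rfl, hc⟩ := List.map_eq_singleton_iff.mp hroots₂
    have hcs₁ : List.Forall₂ G.Generates (r₀.rhs.take k) (cs₁.map yield) :=
      List.forall₂_map_of_map_eq_map hroots₁ fun c' hc' β hβ =>
        generates_yield_of_root_eq_liftSym (hcs c' (by simp [hc'])) (hw.2 c' (by simp [hc'])) hβ
    obtain ⟨y, hy⟩ := ih c (by simp) (hw.2 c (by simp)) hc
    obtain ⟨zs, hzs⟩ := List.exists_forall₂_of_forall_exists fun β hβ =>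
      (G.Z_ne_zero_iff).mp (hZ β hβ)
    have hrhs : List.Forall₂ G.Generates r₀.rhs (cs₁.map yield ++ (c.yield ++ y) :: zs) := by
      rw [List.eq_take_append_get_cons_drop r₀.rhs k]
      exact List.rel_append hcs₁ (.cons hy hzs)
    exact ⟨y ++ zs.flatten, by simpa using Generates.node hr₀ hr₀w hrhs⟩

theorem exists_generates_append_of_generates_preG_start {x : List T}
    (h : (preG G).Generates (.inl (preG G).start) x) :
    ∃ y, G.Generates (.inl G.start) (x ++ y) := by
  obtain ⟨tr, hv, hroot, rfl, hw⟩ := h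
  cases hv with
  | leaf t => simp [root] at hroot
  | node hr hroots hcs =>
    rw [wt_node_ne_zero_iff] at hw
    rcases mem_rules_preG G hr with ⟨r₀, -, rfl⟩ | rfl | rfl | ⟨r₀, -, k, rfl⟩
    · simp [root, preG] at hroot
    · obtain ⟨c, rfl, hc⟩ := List.map_eq_singleton_iff.mp hroots
      obtain ⟨y, hy⟩ := exists_generates_yield_append_of_root_eq_primeSym (hcs c (by simp))
        (hw.2 c (by simp)) (α := .inl G.start) hc
      exact ⟨y, by simpa using hy⟩
    · obtain rfl := List.map_eq_nil_iff.mp hroots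
      obtain ⟨z, hz⟩ := (G.Z_ne_zero_iff).mp hw.1
      exact ⟨z, by simpa using hz⟩
    · simp [root, preG] at hroot

end PrefixGrammar

theorem prefix_grammar_sound_general {V T : Type} (G : WCFG V T ENNReal) (x : List T)
    (hx : 0 < (preG G).lang x) :
    ∃ y : List T, 0 < G.lang (x ++ y) := by
  obtain ⟨y, hy⟩ :=
    exists_generates_append_of_generates_preG_start (((preG G).symLang_ne_zero_iff).mp hx.ne')
  exact ⟨y, pos_iff_ne_zero.mpr ((G.symLang_ne_zero_iff).mpr hy)⟩

/-- Soundness of the prefix grammar: every string generated with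
nonzero weight by `Pre(G)` is a prefix of some string generated with nonzero weight by
`G` (weights are nonnegative reals: all total weights are finite). -/
theorem prefix_grammar_sound {V T : Type} (G : WCFG V T ENNReal)
    (hZ : ∀ α : V ⊕ T, G.Z α ≠ ⊤) (x : List T)
    (hx : 0 < (preG G).lang x) :
    ∃ y : List T, 0 < G.lang (x ++ y) :=
  prefix_grammar_sound_general G x hx
end
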